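/- For any partition (A,B,C) ∈ U, any finite tuples d⃗, e⃗ of equal length such that the map d_l ↦ e_l is a bijection preserving membership in 3ℕ ∪ (3ℕ+2), in N₀, and the companion relation, and any partition (G,H,I) ∈ U with appropriate correspondence (d_l ∈ A ⟹ e_l ∈ G's predecessor's first component, etc.): the triple (J,K,L) with J = Cl((A \ d⃗) ∪ f⁻¹(G)), K = ((B \ d⃗) ∪ f⁻¹(H)) \ J, L = ((C \ d⃗) ∪ f⁻¹(I)) \ J (where f = [d⃗ ↦ e⃗]) is again an element of U, provided B is infinite and (G,H,I) refines the image world. -/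

import Mathlib

/-!
Away from the range of `d` the new triple is the old one, and on the range of `d` it is pulled
back from `(G,H,I)` along `d l ↦ e l`; since `d` determines `e`, this is again a partition, and
enlarging the first part to its closure keeps it one. The constraints imposed by `v` only concern
residues modulo 3: every `R`-path from `3ℕ+2` stays inside `{n | n ≡ 2 [3] ∨ n ≡ 7 [9]}`, so
`3ℕ ⊆ v₁` and `v₂ ⊆ 3ℕ+1 = N₀`. Because `d l ↦ e l` preserves `3ℕ ∪ (3ℕ+2)` and `N₀`, a point
pulled back into the second or third part lands where `v` allows it.
-/

open Classical Set

noncomputable section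

/-- γ(n) = 3n+1 if n ≡ 0 or 2 (mod 3), else n. -/
def gam (n : ℕ) : ℕ := if n % 3 = 0 ∨ n % 3 = 2 then 3 * n + 1 else n

/-- R(x,y) ⟺ x = γ(y) ∨ y = γ(x). -/
def Rrel (x y : ℕ) : Prop := x = gam y ∨ y = gam x

/-- X closed under R. -/
def RClosed (X : Set ℕ) : Prop := ∀ x ∈ X, ∀ y, Rrel x y → y ∈ X

/-- Cl(X): the least R-closed superset of X. -/
def Cl (X : Set ℕ) : Set ℕ := ⋂₀ {Y | X ⊆ Y ∧ RClosed Y}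

/-- Cl⁻(X) = Cl(X) \ X. -/
def Clm (X : Set ℕ) : Set ℕ := Cl X \ X

/-- The companion ñ: the element ≠ n of Cl({n}) if one exists, else n. -/
def companion (n : ℕ) : ℕ :=
  if h : ∃ y, y ≠ n ∧ y ∈ Cl {n} then h.choose else n

def N0 : Set ℕ := {n | gam n = n}

def T0 : Set ℕ := {n | n % 3 = 0}
def T1 : Set ℕ := {n | n % 3 = 1}
def T2 : Set ℕ := {n | n % 3 = 2}
def T02 : Set ℕ := T0 ∪ T2

def v1 : Set ℕ := (Cl T2)ᶜ
def v2 : Set ℕ := Clm T2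
def v3 : Set ℕ := T2

/-- (A,B,C) is a partition of ℕ into three pairwise disjoint sets. -/
def IsPartition3 (A B C : Set ℕ) : Prop :=
  A ∪ B ∪ C = Set.univ ∧ Disjoint A B ∧ Disjoint A C ∧ Disjoint B C

/-- Membership in U: partition with v ⊴ (A,B,C), A closed, B ⊆ v₂. -/
def memU (A B C : Set ℕ) : Prop :=
  IsPartition3 A B C ∧ v1 ⊆ A ∧ C ⊆ v3 ∧ RClosed A ∧ B ⊆ v2

lemma Cl_subset {X Y : Set ℕ} (hXY : X ⊆ Y) (hY : RClosed Y) : Cl X ⊆ Y :=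
  sInter_subset_of_mem ⟨hXY, hY⟩

lemma subset_Cl (X : Set ℕ) : X ⊆ Cl X :=
  subset_sInter fun _ hY => hY.1

lemma RClosed_Cl (X : Set ℕ) : RClosed (Cl X) :=
  fun _ hx y hxy Y hY => hY.2 _ (hx Y hY) y hxy

lemma RClosed_mod_three_eq_two_or_mod_nine_eq_seven :
    RClosed {n | n % 3 = 2 ∨ n % 9 = 7} := by
  rintro x hx y (rfl | rfl) <;>
    simp only [gam, mem_ofPred_eq] at hx ⊢ <;> split at * <;> omega

lemma Cl_T2_subset : Cl T2 ⊆ {n | n % 3 = 2 ∨ n % 9 = 7} :=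
  Cl_subset (fun _ hn => Or.inl hn) RClosed_mod_three_eq_two_or_mod_nine_eq_seven

lemma N0_eq_T1 : N0 = T1 := by
  ext n
  simp only [N0, T1, gam, mem_ofPred_eq]
  split <;> omega

lemma T0_subset_v1 : T0 ⊆ v1 := fun n (hn : n % 3 = 0) hcl => by
  have := Cl_T2_subset hcl
  simp only [mem_ofPred_eq] at this
  omega

lemma v2_subset_T1 : v2 ⊆ T1 := fun n ⟨hcl, (hn : ¬ n % 3 = 2)⟩ => by
  have := Cl_T2_subset hcl
  simp only [mem_ofPred_eq] at this
  show n % 3 = 1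
  omega

lemma T1_subset_v1_union_v2 : T1 ⊆ v1 ∪ v2 := fun n (hn : n % 3 = 1) => by
  by_cases hcl : n ∈ Cl T2
  · exact Or.inr ⟨hcl, fun (h : n % 3 = 2) => by omega⟩
  · exact Or.inl hcl

/-- The paper's `(X \ d⃗) ∪ f⁻¹(Y)` with `f = [d⃗ ↦ e⃗]`. -/
def graft {k : ℕ} (d e : Fin k → ℕ) (X Y : Set ℕ) : Set ℕ :=
  (X \ range d) ∪ {m | ∃ l, m = d l ∧ e l ∈ Y}

section Graft

variable {k : ℕ} {d e : Fin k → ℕ}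

lemma graft_subset {X Y Z : Set ℕ} (hXZ : X ⊆ Z) (hYZ : ∀ l, e l ∈ Y → d l ∈ Z) :
    graft d e X Y ⊆ Z := by
  rintro n (⟨hn, -⟩ | ⟨l, rfl, hl⟩)
  exacts [hXZ hn, hYZ l hl]

lemma subset_graft {X Y Z : Set ℕ} (hZX : Z ⊆ X) (hZY : ∀ l, d l ∈ Z → e l ∈ Y) :
    Z ⊆ graft d e X Y := by
  intro n hn
  by_cases hd : n ∈ range d
  · obtain ⟨l, rfl⟩ := hd
    exact Or.inr ⟨l, rfl, hZY l hn⟩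
  · exact Or.inl ⟨hZX hn, hd⟩

lemma mem_graft_of_not_mem_range {X Y : Set ℕ} {n : ℕ} (hX : n ∈ X) (hd : n ∉ range d) :
    n ∈ graft d e X Y :=
  Or.inl ⟨hX, hd⟩

lemma mem_graft_of_mem {X Y : Set ℕ} (l : Fin k) (hY : e l ∈ Y) : d l ∈ graft d e X Y :=
  Or.inr ⟨l, rfl, hY⟩

lemma disjoint_graft (hde : ∀ l m, d l = d m → e l = e m) {X X' Y Y' : Set ℕ}
    (hX : Disjoint X X') (hY : Disjoint Y Y') : Disjoint (graft d e X Y) (graft d e X' Y') := by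
  rw [disjoint_left]
  rintro n (⟨hn, hnd⟩ | ⟨l, rfl, hl⟩) (⟨hn', hnd'⟩ | ⟨m, hlm, hm⟩)
  · exact disjoint_left.mp hX hn hn'
  · exact hnd ⟨m, hlm.symm⟩
  · exact hnd' ⟨l, rfl⟩
  · exact disjoint_left.mp hY hl (hde l m hlm ▸ hm)

lemma graft_union_graft_union_graft {A B C G H I : Set ℕ} (hABC : A ∪ B ∪ C = univ)
    (hGHI : G ∪ H ∪ I = univ) : graft d e A G ∪ graft d e B H ∪ graft d e C I = univ := by
  refine eq_univ_of_forall fun n => ?_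
  by_cases hd : n ∈ range d
  · obtain ⟨l, rfl⟩ := hd
    rcases hGHI ▸ mem_univ (e l) with (hG | hH) | hI
    exacts [Or.inl (Or.inl (mem_graft_of_mem l hG)), Or.inl (Or.inr (mem_graft_of_mem l hH)),
      Or.inr (mem_graft_of_mem l hI)]
  · rcases hABC ▸ mem_univ n with (hA | hB) | hC
    exacts [Or.inl (Or.inl (mem_graft_of_not_mem_range hA hd)),
      Or.inl (Or.inr (mem_graft_of_not_mem_range hB hd)), Or.inr (mem_graft_of_not_mem_range hC hd)]

lemma isPartition3_graft (hde : ∀ l m, d l = d m → e l = e m) {A B C G H I J : Set ℕ}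
    (hABC : IsPartition3 A B C) (hGHI : IsPartition3 G H I) (hJ : graft d e A G ⊆ J) :
    IsPartition3 J (graft d e B H \ J) (graft d e C I \ J) := by
  obtain ⟨hABCu, -, -, hBC⟩ := hABC
  obtain ⟨hGHIu, -, -, hHI⟩ := hGHI
  refine ⟨?_, disjoint_sdiff_right, disjoint_sdiff_right,
    (disjoint_graft hde hBC hHI).mono sdiff_subset sdiff_subset⟩
  refine eq_univ_of_forall fun n => ?_
  rcases graft_union_graft_union_graft (d := d) (e := e) hABCu hGHIu ▸ mem_univ n
    with (hA | hB) | hC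
  · exact Or.inl (Or.inl (hJ hA))
  · by_cases hnJ : n ∈ J
    exacts [Or.inl (Or.inl hnJ), Or.inl (Or.inr ⟨hB, hnJ⟩)]
  · by_cases hnJ : n ∈ J
    exacts [Or.inl (Or.inl hnJ), Or.inr ⟨hC, hnJ⟩]

end Graft

section Transfer

variable {A G Y : Set ℕ} {x y : ℕ}

lemma mem_v3_of_transfer (hv1A : v1 ⊆ A) (hYv3 : Y ⊆ v3) (hGY : Disjoint G Y)
    (h02 : x ∈ T02 ↔ y ∈ T02) (hA : x ∈ A → y ∈ G) (hy : y ∈ Y) : x ∈ v3 := by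
  rcases h02.mpr (Or.inr (hYv3 hy)) with hx | hx
  · exact absurd hy (disjoint_left.mp hGY (hA (hv1A (T0_subset_v1 hx))))
  · exact hx

lemma mem_v2_of_transfer (hv1A : v1 ⊆ A) (hYv2 : Y ⊆ v2) (hGY : Disjoint G Y)
    (hN0 : x ∈ N0 ↔ y ∈ N0) (hA : x ∈ A → y ∈ G) (hy : y ∈ Y) : x ∈ v2 := by
  rw [N0_eq_T1] at hN0
  rcases T1_subset_v1_union_v2 (hN0.mpr (v2_subset_T1 (hYv2 hy))) with hx | hx
  · exact absurd hy (disjoint_left.mp hGY (hA (hv1A hx)))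
  · exact hx

end Transfer

theorem claim1_asimulation_general {k : ℕ} (d e : Fin k → ℕ) (A B C G H I : Set ℕ)
    (hABC : memU A B C) (hGHI : memU G H I)
    (hbij : ∀ l m, d l = d m ↔ e l = e m)
    (h02 : ∀ l, d l ∈ T02 ↔ e l ∈ T02)
    (hN0 : ∀ l, d l ∈ N0 ↔ e l ∈ N0)
    (hA : ∀ l, d l ∈ A → e l ∈ G) :
    memU (Cl ((A \ Set.range d) ∪ {m | ∃ l, m = d l ∧ e l ∈ G}))
      (((B \ Set.range d) ∪ {m | ∃ l, m = d l ∧ e l ∈ H}) \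
        Cl ((A \ Set.range d) ∪ {m | ∃ l, m = d l ∧ e l ∈ G}))
      (((C \ Set.range d) ∪ {m | ∃ l, m = d l ∧ e l ∈ I}) \
        Cl ((A \ Set.range d) ∪ {m | ∃ l, m = d l ∧ e l ∈ G})) := by
  obtain ⟨hABCp, hv1A, hCv3, -, hBv2⟩ := hABC
  obtain ⟨hGHIp, -, hIv3, -, hHv2⟩ := hGHI
  show memU (Cl (graft d e A G)) (graft d e B H \ Cl (graft d e A G))
    (graft d e C I \ Cl (graft d e A G))
  refine ⟨isPartition3_graft (fun l m => (hbij l m).mp) hABCp hGHIp (subset_Cl _),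
    (subset_graft hv1A fun l hl => hA l (hv1A hl)).trans (subset_Cl _),
    sdiff_subset.trans (graft_subset hCv3 fun l =>
      mem_v3_of_transfer hv1A hIv3 hGHIp.2.2.1 (h02 l) (hA l)),
    RClosed_Cl _,
    sdiff_subset.trans (graft_subset hBv2 fun l =>
      mem_v2_of_transfer hv1A hHv2 hGHIp.2.1 (hN0 l) (hA l))⟩

theorem claim1_asimulation {k : ℕ} (d e : Fin k → ℕ) (A B C G H I : Set ℕ)
    (hABC : memU A B C) (hBinf : B.Infinite) (hGHI : memU G H I)
    (hbij : ∀ l m, d l = d m ↔ e l = e m)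
    (h02 : ∀ l, d l ∈ T02 ↔ e l ∈ T02)
    (hN0 : ∀ l, d l ∈ N0 ↔ e l ∈ N0)
    (hcomp : ∀ l m, d l = companion (d m) ↔ e l = companion (e m))
    (hA : ∀ l, d l ∈ A → e l ∈ G)
    (hB : ∀ l, d l ∈ B → e l ∈ G ∪ H) :
    memU (Cl ((A \ Set.range d) ∪ {m | ∃ l, m = d l ∧ e l ∈ G}))
      (((B \ Set.range d) ∪ {m | ∃ l, m = d l ∧ e l ∈ H}) \
        Cl ((A \ Set.range d) ∪ {m | ∃ l, m = d l ∧ e l ∈ G}))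
      (((C \ Set.range d) ∪ {m | ∃ l, m = d l ∧ e l ∈ I}) \
        Cl ((A \ Set.range d) ∪ {m | ∃ l, m = d l ∧ e l ∈ G})) :=
  claim1_asimulation_general d e A B C G H I hABC hGHI hbij h02 hN0 hA
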